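/- 48·√(2/π)·∫₀^{∞} e^{-2x²}·erf(x)² dx = 24·(1 - (2/π)·arcsec(3)). -/

import Mathlib

/-!
Feynman's trick, twice. Differentiating under the integral sign,
`d/da ∫ g(x) erf(a x) dx = (2/√π) ∫ x g(x) exp(-a²x²) dx`,
so `∫ g erf = H 1 - H 0` for every antiderivative `H` of the right-hand side (as `erf 0 = 0`).
For `g(x) = x exp(-p x²)` the right-hand side is a Gaussian second moment, which gives
`∫₀^∞ x exp(-p x²) erf x dx = 1 / (2p √(p+1))`. For `g(x) = exp(-2x²) erf x` it then equals
`1 / (√π (2+a²) √(3+a²))`, with antiderivative `arctan(a / √(2(3+a²))) / √(2π)`.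
At `a = 1` this is `arctan(1/√8) / √(2π)`, and `arctan(1/√8) = π/2 - arccos(1/3)`.
-/

open Real MeasureTheory

/-- The error function. -/
noncomputable def erf (x : ℝ) : ℝ :=
  2 / Real.sqrt π * ∫ t in (0:ℝ)..x, Real.exp (-t^2)

open Set

theorem hasDerivAt_erf (y : ℝ) : HasDerivAt erf (2 / √π * exp (-y ^ 2)) y :=
  ((continuous_exp.comp (continuous_pow 2).neg).integral_hasStrictDerivAt 0 y).hasDerivAt.const_mul
    _

theorem continuous_erf : Continuous erf :=
  continuous_iff_continuousAt.2 fun y => (hasDerivAt_erf y).continuousAt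

@[simp] theorem erf_zero : erf 0 = 0 := by simp [erf]

theorem erf_neg (y : ℝ) : erf (-y) = -erf y := by
  have h := intervalIntegral.integral_comp_neg (a := 0) (b := -y) fun t => exp (-t ^ 2)
  simp only [neg_sq, neg_zero, neg_neg] at h
  rw [erf, erf, h, intervalIntegral.integral_symm, mul_neg]

theorem erf_mem_Icc_of_nonneg {y : ℝ} (hy : 0 ≤ y) : erf y ∈ Icc 0 1 := by
  have hexp : ∀ t, 0 ≤ exp (-t ^ 2) := fun t => (exp_pos _).le
  have hpi : 0 < √π := sqrt_pos.2 pi_pos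
  rw [erf, intervalIntegral.integral_of_le hy]
  refine ⟨mul_nonneg (by positivity) (setIntegral_nonneg measurableSet_Ioc fun t _ => hexp t),
    ?_⟩
  have hle : ∫ t in Ioc 0 y, exp (-t ^ 2) ≤ √π / 2 := by
    have h := integral_gaussian_Ioi 1
    simp only [div_one, neg_mul, one_mul] at h
    rw [← h]
    refine setIntegral_mono_set ?_ (.of_forall hexp) (.of_forall Ioc_subset_Ioi_self)
    simpa using (integrable_exp_neg_mul_sq one_pos).integrableOn
  calc 2 / √π * ∫ t in Ioc 0 y, exp (-t ^ 2) ≤ 2 / √π * (√π / 2) := by gcongr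
    _ = 1 := by field_simp

theorem abs_erf_le_one (y : ℝ) : |erf y| ≤ 1 := by
  rcases le_total 0 y with hy | hy
  · obtain ⟨h0, h1⟩ := erf_mem_Icc_of_nonneg hy
    exact abs_le.2 ⟨by linarith, h1⟩
  · obtain ⟨h0, h1⟩ := erf_mem_Icc_of_nonneg (neg_nonneg.2 hy)
    rw [erf_neg] at h0 h1
    exact abs_le.2 ⟨by linarith, by linarith⟩

theorem hasDerivAt_erf_mul (a x : ℝ) :
    HasDerivAt (fun a => erf (a * x)) (2 / √π * exp (-(a * x) ^ 2) * x) a :=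
  (hasDerivAt_erf (a * x)).comp (h := fun a => a * x) a (hasDerivAt_mul_const x)

section Feynman

variable {μ : Measure ℝ} {g : ℝ → ℝ}

theorem hasDerivAt_integral_mul_erf_mul (hg : Integrable g μ)
    (hxg : Integrable (fun x => x * g x) μ) (a : ℝ) :
    HasDerivAt (fun a => ∫ x, g x * erf (a * x) ∂μ)
      (2 / √π * ∫ x, x * g x * exp (-(a * x) ^ 2) ∂μ) a := by
  have hmeas : ∀ a : ℝ, AEStronglyMeasurable (fun x => erf (a * x)) μ := fun a =>
    (continuous_erf.comp (continuous_const_mul a)).aestronglyMeasurable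
  have key := hasDerivAt_integral_of_dominated_loc_of_deriv_le (μ := μ) (x₀ := a)
    (F := fun a x => g x * erf (a * x))
    (F' := fun a x => g x * (2 / √π * exp (-(a * x) ^ 2) * x))
    (bound := fun x => 2 / √π * ‖x * g x‖) Filter.univ_mem
    (.of_forall fun a => hg.aestronglyMeasurable.mul (hmeas a))
    (hg.mul_bdd (hmeas a) (.of_forall fun x => abs_erf_le_one _))
    (hg.aestronglyMeasurable.mul (((continuous_exp.comp
      ((continuous_const_mul a).pow 2).neg).aestronglyMeasurable.const_mul _).mul
      aestronglyMeasurable_id))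
    (.of_forall fun x b _ => ?_) (hxg.norm.const_mul _)
    (.of_forall fun x b _ => (hasDerivAt_erf_mul b x).const_mul (g x))
  · refine key.2.congr_deriv ?_
    rw [← integral_const_mul]
    congr 1 with x
    ring
  · have hexp : exp (-(b * x) ^ 2) ≤ 1 := exp_le_one_iff.2 (neg_nonpos.2 (sq_nonneg _))
    calc ‖g x * (2 / √π * exp (-(b * x) ^ 2) * x)‖
        = 2 / √π * exp (-(b * x) ^ 2) * ‖x * g x‖ := by
          rw [norm_mul, norm_mul, norm_mul, norm_mul, Real.norm_of_nonneg (exp_pos _).le,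
            Real.norm_of_nonneg (by positivity : (0:ℝ) ≤ 2 / √π)]
          ring
      _ ≤ 2 / √π * 1 * ‖x * g x‖ := by gcongr
      _ = 2 / √π * ‖x * g x‖ := by rw [mul_one]

theorem integral_mul_erf_eq_sub (hg : Integrable g μ) (hxg : Integrable (fun x => x * g x) μ)
    {H : ℝ → ℝ}
    (hH : ∀ a, HasDerivAt H (2 / √π * ∫ x, x * g x * exp (-(a * x) ^ 2) ∂μ) a) :
    ∫ x, g x * erf x ∂μ = H 1 - H 0 := by
  have hderiv : ∀ a, HasDerivAt (fun a => (∫ x, g x * erf (a * x) ∂μ) - H a) 0 a := by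
    intro a
    rw [← sub_self (2 / √π * ∫ x, x * g x * exp (-(a * x) ^ 2) ∂μ)]
    exact (hasDerivAt_integral_mul_erf_mul hg hxg a).sub (hH a)
  have := is_const_of_deriv_eq_zero (fun a => (hderiv a).differentiableAt)
    (fun a => (hderiv a).deriv) 1 0
  simp only [one_mul, zero_mul, erf_zero, mul_zero, integral_zero] at this
  linarith

end Feynman

theorem integral_Ioi_sq_mul_exp_neg_mul_sq {b : ℝ} (hb : 0 < b) :
    ∫ x in Ioi (0:ℝ), x ^ 2 * exp (-b * x ^ 2) = √π / (4 * b * √b) := by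
  have h := integral_rpow_mul_exp_neg_mul_rpow (p := 2) (q := 2) two_pos (by norm_num) hb
  simp only [rpow_two] at h
  have hGamma : Gamma ((2 + 1) / 2) = √π / 2 := by
    rw [show ((2:ℝ) + 1) / 2 = 1 / 2 + 1 by norm_num, Gamma_add_one (by norm_num),
      Gamma_one_half_eq]
    ring
  have hpow : b ^ (-(2 + 1) / 2 : ℝ) = (b * √b)⁻¹ := by
    rw [show (-(2 + 1) / 2 : ℝ) = -(1 + 1 / 2) by norm_num, rpow_neg hb.le, rpow_add hb,
      rpow_one, ← sqrt_eq_rpow]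
  rw [h, hGamma, hpow]
  have := sqrt_pos.2 hb
  field_simp
  ring

theorem hasDerivAt_div_sqrt_add_sq {p : ℝ} (hp : 0 < p) (b : ℝ) :
    HasDerivAt (fun b => b / √(p + b ^ 2)) (p / ((p + b ^ 2) * √(p + b ^ 2))) b := by
  have hc : 0 < p + b ^ 2 := by positivity
  have hs : 0 < √(p + b ^ 2) := sqrt_pos.2 hc
  have hsqrt : HasDerivAt (fun b => √(p + b ^ 2)) (b / √(p + b ^ 2)) b := by
    refine (((hasDerivAt_pow 2 b).const_add p).sqrt hc.ne').congr_deriv ?_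
    field_simp
    ring
  refine ((hasDerivAt_id b).div hsqrt hs.ne').congr_deriv ?_
  have := sq_sqrt hc.le
  simp only [id]
  field_simp
  rw [this]
  ring

theorem integral_Ioi_mul_exp_neg_mul_sq_mul_erf {p : ℝ} (hp : 0 < p) :
    ∫ x in Ioi (0:ℝ), x * exp (-p * x ^ 2) * erf x = 1 / (2 * p * √(p + 1)) := by
  have hg : IntegrableOn (fun x => x * exp (-p * x ^ 2)) (Ioi 0) :=
    (integrable_mul_exp_neg_mul_sq hp).integrableOn
  have hxg : IntegrableOn (fun x => x * (x * exp (-p * x ^ 2))) (Ioi 0) := by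
    simpa [← sq, ← mul_assoc] using
      integrableOn_rpow_mul_exp_neg_mul_sq hp (s := 2) (by norm_num)
  have hH : ∀ b, HasDerivAt (fun b => (2 * p)⁻¹ * (b / √(p + b ^ 2)))
      (2 / √π * ∫ x in Ioi 0, x * (x * exp (-p * x ^ 2)) * exp (-(b * x) ^ 2)) b := by
    intro b
    have hc : 0 < p + b ^ 2 := by positivity
    have hmoment : ∫ x in Ioi 0, x * (x * exp (-p * x ^ 2)) * exp (-(b * x) ^ 2)
        = ∫ x in Ioi 0, x ^ 2 * exp (-(p + b ^ 2) * x ^ 2) := by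
      congr 1 with x
      rw [show -(p + b ^ 2) * x ^ 2 = -p * x ^ 2 + -(b * x) ^ 2 by ring, exp_add]
      ring
    refine ((hasDerivAt_div_sqrt_add_sq hp b).const_mul (2 * p)⁻¹).congr_deriv ?_
    rw [hmoment, integral_Ioi_sq_mul_exp_neg_mul_sq hc]
    have := sqrt_pos.2 pi_pos
    field_simp
    norm_num
  rw [integral_mul_erf_eq_sub hg hxg hH]
  norm_num
  ring

theorem integral_Ioi_exp_neg_two_mul_sq_mul_erf_sq :
    ∫ x in Ioi (0:ℝ), exp (-2 * x ^ 2) * erf x ^ 2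
      = (√(2 * π))⁻¹ * arctan (2 * √2)⁻¹ := by
  have herf : ∀ᵐ x ∂volume.restrict (Ioi (0:ℝ)), ‖erf x‖ ≤ 1 :=
    .of_forall fun x => abs_erf_le_one x
  have hg : IntegrableOn (fun x => exp (-2 * x ^ 2) * erf x) (Ioi 0) :=
    (integrable_exp_neg_mul_sq two_pos).integrableOn.mul_bdd
      continuous_erf.aestronglyMeasurable herf
  have hxg : IntegrableOn (fun x => x * (exp (-2 * x ^ 2) * erf x)) (Ioi 0) := by
    simpa only [IntegrableOn, mul_assoc] using
      (integrable_mul_exp_neg_mul_sq two_pos).integrableOn.mul_bdd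
        continuous_erf.aestronglyMeasurable herf
  have hH : ∀ a,
      HasDerivAt (fun a => (√(2 * π))⁻¹ * arctan ((√2)⁻¹ * (a / √(3 + a ^ 2))))
      (2 / √π * ∫ x in Ioi 0, x * (exp (-2 * x ^ 2) * erf x) * exp (-(a * x) ^ 2)) a := by
    intro a
    have hc : 0 < 2 + a ^ 2 := by positivity
    have hinner : ∫ x in Ioi 0, x * (exp (-2 * x ^ 2) * erf x) * exp (-(a * x) ^ 2)
        = ∫ x in Ioi 0, x * exp (-(2 + a ^ 2) * x ^ 2) * erf x := by
      congr 1 with x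
      rw [show -(2 + a ^ 2) * x ^ 2 = -2 * x ^ 2 + -(a * x) ^ 2 by ring, exp_add]
      ring
    refine ((((hasDerivAt_div_sqrt_add_sq three_pos a).const_mul (√2)⁻¹).arctan).const_mul
      (√(2 * π))⁻¹).congr_deriv ?_
    rw [hinner, integral_Ioi_mul_exp_neg_mul_sq_mul_erf hc]
    have h2 := sq_sqrt (zero_le_two : (0:ℝ) ≤ 2)
    have h3 := sq_sqrt (by positivity : (0:ℝ) ≤ 3 + a ^ 2)
    have := sqrt_pos.2 pi_pos
    have := sqrt_pos.2 (by positivity : (0:ℝ) < 3 + a ^ 2)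
    rw [sqrt_mul zero_le_two, show 2 + a ^ 2 + 1 = 3 + a ^ 2 by ring]
    field_simp
    rw [h2, h3]
    ring
  have hsq : ∀ x, exp (-2 * x ^ 2) * erf x ^ 2 = exp (-2 * x ^ 2) * erf x * erf x :=
    fun x => by ring
  simp_rw [hsq]
  rw [integral_mul_erf_eq_sub hg hxg hH]
  norm_num

theorem arctan_inv_two_mul_sqrt_two : arctan (2 * √2)⁻¹ = π / 2 - arccos (1 / 3) := by
  have h8 : √(1 - (1 / 3) ^ 2) / (1 / 3) = 2 * √2 := by
    rw [show (1:ℝ) - (1 / 3) ^ 2 = 2 ^ 2 * 2 / 3 ^ 2 by norm_num, sqrt_div' _ (by norm_num),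
      sqrt_mul (by norm_num), sqrt_sq (by norm_num), sqrt_sq (by norm_num)]
    ring
  rw [arctan_inv_of_pos (by positivity), arccos_eq_arctan (by norm_num), h8]

theorem stmt_13 :
    48 * Real.sqrt (2/π) *
        (∫ x in Set.Ioi (0:ℝ), Real.exp (-2 * x^2) * erf x ^ 2)
      = 24 * (1 - 2/π * Real.arccos (1/3)) := by
  rw [integral_Ioi_exp_neg_two_mul_sq_mul_erf_sq, arctan_inv_two_mul_sqrt_two]
  have hsqrt : √(2 / π) * (√(2 * π))⁻¹ = π⁻¹ := by
    rw [← sqrt_inv, ← sqrt_mul (by positivity), show 2 / π * (2 * π)⁻¹ = π⁻¹ ^ 2 by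
      field_simp, sqrt_sq (inv_nonneg.2 pi_pos.le)]
  calc 48 * √(2 / π) * ((√(2 * π))⁻¹ * (π / 2 - arccos (1 / 3)))
      = 48 * (√(2 / π) * (√(2 * π))⁻¹) * (π / 2 - arccos (1 / 3)) := by ring
    _ = 24 * (1 - 2 / π * arccos (1 / 3)) := by
      rw [hsqrt]
      field_simp
      ring
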